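/- arXiv:1509.07171 — 2 statements merged into one kernel-verified Lean document; each statement's English description precedes it below -/
import Mathlib

section
/- With A and M(A) as above, a morphism f : B → M(A) in C from a semigroup B is multiplicative (a semigroup morphism into the monoid M(A)) if and only if the corresponding M-morphism B ⇸ A with components f₁ = e₁∘(f⊗1) and f₂ = e₂∘(1⊗f) is multiplicative, i.e. f₁∘(m_B⊗1) = f₁∘(1⊗f₁) and f₂∘(1⊗m_B) = f₂∘(f₂⊗1). -/
/-!
Two morphisms into `𝕄(A)` coincide as soon as their components `X ⊗ A ⟶ A` and `A ⊗ X ⟶ A`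
do, by the uniqueness in the universal property. Since `e₁` and `e₂` are multiplicative actions
of `𝕄(A)`, the components of `(f ⊗ f) ≫ m_𝕄` are the iterated components of `f`, so each
multiplicativity condition on `(f₁, f₂)` says exactly that `mB ≫ f` and `(f ⊗ f) ≫ m_𝕄` have the
same component on that side.
-/

open CategoryTheory Category MonoidalCategory Limits

universe v u

variable {C : Type u} [Category.{v} C] [MonoidalCategory C]

/-- A semigroup multiplication is non-degenerate. -/
def NonDeg (A : C) (m : A ⊗ A ⟶ A) : Prop :=
  (∀ X Y : C, Function.Injective (fun f : X ⟶ Y ⊗ A =>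
      (f ▷ A) ≫ (α_ Y A A).hom ≫ (Y ◁ m))) ∧
  (∀ X Y : C, Function.Injective (fun g : X ⟶ A ⊗ Y =>
      (A ◁ g) ≫ (α_ A A Y).inv ≫ (m ▷ Y)))

/-- Associativity of a semigroup multiplication. -/
def SgAssoc (A : C) (m : A ⊗ A ⟶ A) : Prop :=
  (m ▷ A) ≫ m = (α_ A A A).hom ≫ (A ◁ m) ≫ m

/-- A pair (f₁, f₂) is an `𝕄`-morphism `A ⇸ B`: eq. (2). -/
def IsMMor {A B : C} (mB : B ⊗ B ⟶ B) (f₁ : A ⊗ B ⟶ B) (f₂ : B ⊗ A ⟶ B) : Prop :=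
  (f₂ ▷ B) ≫ mB = (α_ B A B).hom ≫ (B ◁ f₁) ≫ mB

/-- The first component of an `𝕄`-morphism is multiplicative. -/
def Mult₁ {A B : C} (mA : A ⊗ A ⟶ A) (f₁ : A ⊗ B ⟶ B) : Prop :=
  (mA ▷ B) ≫ f₁ = (α_ A A B).hom ≫ (A ◁ f₁) ≫ f₁

/-- The second component of an `𝕄`-morphism is multiplicative. -/
def Mult₂ {A B : C} (mA : A ⊗ A ⟶ A) (f₂ : B ⊗ A ⟶ B) : Prop :=
  (α_ B A A).hom ≫ (B ◁ mA) ≫ f₂ = (f₂ ▷ A) ≫ f₂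

/-- The multiplier monoid `𝕄(A)` of a non-degenerate semigroup `A`, presented by its
universal property: morphisms `X ⟶ 𝕄(A)` correspond bijectively to `𝕄`-morphisms
`X ⇸ A` (Paragraph 2.7, via the pullback of `φ` and `ψ`). -/
structure MultiplierMonoid {C : Type u} [Category.{v} C] [MonoidalCategory C]
    (A : C) (m : A ⊗ A ⟶ A) where
  M : C
  e₁ : M ⊗ A ⟶ A
  e₂ : A ⊗ M ⟶ A
  compat : IsMMor m e₁ e₂
  lift : ∀ {X : C} (f₁ : X ⊗ A ⟶ A) (f₂ : A ⊗ X ⟶ A), IsMMor m f₁ f₂ →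
      ∃! f : X ⟶ M, f₁ = (f ▷ A) ≫ e₁ ∧ f₂ = (A ◁ f) ≫ e₂

section Components

variable {A P X Y : C} {mP : P ⊗ P ⟶ P}

theorem whiskerRight_tensorHom_comp_of_mult {e : P ⊗ A ⟶ A} (h : Mult₁ mP e)
    (f : X ⟶ P) (g : Y ⟶ P) :
    (((f ⊗ₘ g) ≫ mP) ▷ A) ≫ e = (α_ X Y A).hom ≫ (X ◁ ((g ▷ A) ≫ e)) ≫ (f ▷ A) ≫ e := by
  rw [comp_whiskerRight, assoc, h, MonoidalCategory.tensorHom_def, comp_whiskerRight, assoc,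
    associator_naturality_middle_assoc, associator_naturality_left_assoc,
    whiskerLeft_comp_assoc, ← whisker_exchange_assoc, ← whisker_exchange_assoc]

theorem whiskerLeft_tensorHom_comp_of_mult {e : A ⊗ P ⟶ A}
    (h : (A ◁ mP) ≫ e = (α_ A P P).inv ≫ (e ▷ P) ≫ e) (f : X ⟶ P) (g : Y ⟶ P) :
    (A ◁ ((f ⊗ₘ g) ≫ mP)) ≫ e = (α_ A X Y).inv ≫ (((A ◁ f) ≫ e) ▷ Y) ≫ (A ◁ g) ≫ e := by
  rw [whiskerLeft_comp, assoc, h, MonoidalCategory.tensorHom_def', whiskerLeft_comp, assoc,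
    associator_inv_naturality_middle_assoc, associator_inv_naturality_right_assoc,
    comp_whiskerRight_assoc, whisker_exchange_assoc, whisker_exchange_assoc]

variable {B : C} (mB : B ⊗ B ⟶ B) (f : B ⟶ P)

theorem mult₁_whiskerRight_comp_iff {e : P ⊗ A ⟶ A} (h : Mult₁ mP e) :
    Mult₁ mB ((f ▷ A) ≫ e) ↔ ((mB ≫ f) ▷ A) ≫ e = (((f ⊗ₘ f) ≫ mP) ▷ A) ≫ e := by
  rw [Mult₁, whiskerRight_tensorHom_comp_of_mult h, comp_whiskerRight, assoc]

theorem mult₂_whiskerLeft_comp_iff {e : A ⊗ P ⟶ A}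
    (h : (A ◁ mP) ≫ e = (α_ A P P).inv ≫ (e ▷ P) ≫ e) :
    Mult₂ mB ((A ◁ f) ≫ e) ↔ (A ◁ (mB ≫ f)) ≫ e = (A ◁ ((f ⊗ₘ f) ≫ mP)) ≫ e := by
  rw [Mult₂, whiskerLeft_tensorHom_comp_of_mult h, ← Iso.eq_inv_comp, whiskerLeft_comp, assoc]

end Components

theorem IsMMor.whisker_comp {A X Y : C} {m : A ⊗ A ⟶ A} {f₁ : X ⊗ A ⟶ A} {f₂ : A ⊗ X ⟶ A}
    (h : IsMMor m f₁ f₂) (g : Y ⟶ X) : IsMMor m ((g ▷ A) ≫ f₁) ((A ◁ g) ≫ f₂) := by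
  rw [IsMMor, comp_whiskerRight, assoc, h, associator_naturality_middle_assoc,
    whiskerLeft_comp_assoc]

theorem MultiplierMonoid.hom_ext {A X : C} {m : A ⊗ A ⟶ A} (M : MultiplierMonoid A m)
    {g g' : X ⟶ M.M} (h₁ : (g ▷ A) ≫ M.e₁ = (g' ▷ A) ≫ M.e₁)
    (h₂ : (A ◁ g) ≫ M.e₂ = (A ◁ g') ≫ M.e₂) : g = g' := by
  obtain ⟨_, _, uniq⟩ := M.lift _ _ (M.compat.whisker_comp g)
  exact (uniq g ⟨rfl, rfl⟩).trans (uniq g' ⟨h₁, h₂⟩).symm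

theorem multiplierMonoid_mor_mult_iff_general
    {A B : C} (m : A ⊗ A ⟶ A)
    (M : MultiplierMonoid A m) (mM : M.M ⊗ M.M ⟶ M.M)
    (h1 : (mM ▷ A) ≫ M.e₁ = (α_ M.M M.M A).hom ≫ (M.M ◁ M.e₁) ≫ M.e₁)
    (h2 : (A ◁ mM) ≫ M.e₂ = (α_ A M.M M.M).inv ≫ (M.e₂ ▷ M.M) ≫ M.e₂)
    (mB : B ⊗ B ⟶ B) (f : B ⟶ M.M) :
    mB ≫ f = (f ⊗ₘ f) ≫ mM ↔
      (Mult₁ mB ((f ▷ A) ≫ M.e₁) ∧ Mult₂ mB ((A ◁ f) ≫ M.e₂)) := by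
  rw [mult₁_whiskerRight_comp_iff mB f h1, mult₂_whiskerLeft_comp_iff mB f h2]
  refine ⟨fun hf => ?_, fun ⟨h₁, h₂⟩ => M.hom_ext h₁ h₂⟩
  rw [hf]
  exact ⟨rfl, rfl⟩

/-- Proposition 2.8 (ii): a morphism `f : B ⟶ 𝕄(A)` from a semigroup `B` is multiplicative
if and only if the corresponding `𝕄`-morphism `B ⇸ A`, with components
`f₁ = e₁ ∘ (f ⊗ 1)` and `f₂ = e₂ ∘ (1 ⊗ f)`, is multiplicative. -/
theorem multiplierMonoid_mor_mult_iff [BraidedCategory C] [MonoidalClosed C]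
    {A B : C} (m : A ⊗ A ⟶ A) (hassoc : SgAssoc A m) (hnd : NonDeg A m)
    (M : MultiplierMonoid A m) (mM : M.M ⊗ M.M ⟶ M.M)
    (h1 : (mM ▷ A) ≫ M.e₁ = (α_ M.M M.M A).hom ≫ (M.M ◁ M.e₁) ≫ M.e₁)
    (h2 : (A ◁ mM) ≫ M.e₂ = (α_ A M.M M.M).inv ≫ (M.e₂ ▷ M.M) ≫ M.e₂)
    (mB : B ⊗ B ⟶ B) (hB : SgAssoc B mB) (f : B ⟶ M.M) :
    mB ≫ f = (f ⊗ₘ f) ≫ mM ↔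
      (Mult₁ mB ((f ▷ A) ≫ M.e₁) ∧ Mult₂ mB ((A ◁ f) ≫ M.e₂)) :=
  multiplierMonoid_mor_mult_iff_general m M mM h1 h2 mB f
end

section
/- There is a category M whose objects are the non-degenerate semigroups in C with multiplication in Q, whose morphisms A → B are the dense multiplicative M-morphisms A ⇸ B, with composition ∙ and identities i = (m, m). Moreover the monoidal unit I, equipped with its trivial (identity) multiplication, is an initial object of M. -/
/-!
The composite `f ∙ g` is built by descent: its first component is the map `h₁` with
`(X ◁ g₁) ≫ h₁ = α⁻¹ ≫ (f₁ ▷ Z) ≫ g₁`, which exists because `X ◁ g₁` is the coequalizer of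
`X ◁` (any pair coequalized by `g₁`); dually for `h₂` along `g₂ ▷ X`. To see that the right-hand
side coequalizes such a pair, multiply on the left in `Z` and precompose with the epimorphism
`g₂ ▷ -`: by non-degeneracy of `Z` it suffices that, in element notation,
`g₂(z ⊗ y) · g₁(f₁(x ⊗ y') ⊗ z') = g₂(z ⊗ f₂(y ⊗ x)) · g₁(y' ⊗ z')`, which follows from the
compatibility and multiplicativity of `f` and `g`. Every other law (multiplicativity and
compatibility of `f ∙ g`, units, associativity) is checked after precomposing with a tensor of
maps in `Q`, all of which are epimorphisms. For initiality, multiplicativity of an epimorphism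
`v : I ⊗ A ⟶ A` reads `v = v ≫ λ⁻¹ ≫ v`, which forces `v = λ`.
-/

open CategoryTheory Category MonoidalCategory Limits

universe v u

variable {C : Type u} [Category.{v} C] [MonoidalCategory C]

structure QData (C : Type u) [Category.{v} C] [MonoidalCategory C] where
  Q : MorphismProperty C
  regEpi : ∀ ⦃X Y : C⦄ (f : X ⟶ Y), Q f → Nonempty (RegularEpi f)
  comp_mem : ∀ ⦃X Y Z : C⦄ (f : X ⟶ Y) (g : Y ⟶ Z), Q f → Q g → Q (f ≫ g)
  tensor_mem : ∀ ⦃X Y X' Y' : C⦄ (f : X ⟶ Y) (g : X' ⟶ Y'), Q f → Q g → Q (f ⊗ₘ g)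
  iso_mem : ∀ ⦃X Y : C⦄ (f : X ⟶ Y), IsIso f → Q f
  cancel : ∀ ⦃X Y Z : C⦄ (s : X ⟶ Y) (t : Y ⟶ Z), Q s → Q (s ≫ t) → Q t
  coeq : ∀ ⦃X Y : C⦄ (f : X ⟶ Y), Q f →
    ∃ (Z : C) (u v : Z ⟶ X) (h : u ≫ f = v ≫ f),
      Nonempty (IsColimit (Cofork.ofπ f h)) ∧
      (∀ W : C, Nonempty (IsColimit (Cofork.ofπ (f := W ◁ u) (g := W ◁ v) (W ◁ f)
        (by rw [← MonoidalCategory.whiskerLeft_comp, ← MonoidalCategory.whiskerLeft_comp, h])))) ∧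
      (∀ W : C, Nonempty (IsColimit (Cofork.ofπ (f := u ▷ W) (g := v ▷ W) (f ▷ W)
        (by rw [← MonoidalCategory.comp_whiskerRight, ← MonoidalCategory.comp_whiskerRight, h]))))

/-- An object of the category `ℳ`. -/
structure MObj {C : Type u} [Category.{v} C] [MonoidalCategory C] (QD : QData C) where
  A : C
  m : A ⊗ A ⟶ A
  assoc : SgAssoc A m
  nondeg : NonDeg A m
  mQ : QD.Q m

/-- A morphism of the category `ℳ`. -/
@[ext]
structure MHom {C : Type u} [Category.{v} C] [MonoidalCategory C] {QD : QData C}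
    (X Y : MObj QD) where
  f₁ : X.A ⊗ Y.A ⟶ Y.A
  f₂ : Y.A ⊗ X.A ⟶ Y.A
  compat : IsMMor Y.m f₁ f₂
  mult₁ : Mult₁ X.m f₁
  mult₂ : Mult₂ X.m f₂
  dense₁ : QD.Q f₁
  dense₂ : QD.Q f₂

/-- The identity `𝕄`-morphism `i = (m, m)`. -/
def MObj.idM {QD : QData C} (X : MObj QD) : MHom X X where
  f₁ := X.m
  f₂ := X.m
  compat := X.assoc
  mult₁ := X.assoc
  mult₂ := X.assoc.symm
  dense₁ := X.mQ
  dense₂ := X.mQ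

def MObj.unit (QD : QData C) : MObj QD where
  A := 𝟙_ C
  m := (λ_ (𝟙_ C)).hom
  assoc := by
    dsimp [SgAssoc]
    monoidal
  nondeg := by
    constructor
    · intro X Y f g h
      have h' : f ▷ 𝟙_ C = g ▷ 𝟙_ C := by
        have this := h
        dsimp at this
        simp only [← Category.assoc] at this
        rw [cancel_mono] at this
        rwa [cancel_mono] at this
      rwa [MonoidalCategory.whiskerRight_id, MonoidalCategory.whiskerRight_id,
        cancel_epi, cancel_mono] at h'
    · intro X Y f g h
      have h' : 𝟙_ C ◁ f = 𝟙_ C ◁ g := by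
        have this := h
        dsimp at this
        simp only [← Category.assoc] at this
        rw [cancel_mono] at this
        rwa [cancel_mono] at this
      rwa [MonoidalCategory.id_whiskerLeft, MonoidalCategory.id_whiskerLeft,
        cancel_epi, cancel_mono] at h'
  mQ := QD.iso_mem _ inferInstance

namespace QData

variable (QD : QData C)

theorem epi_of_mem {X Y : C} {f : X ⟶ Y} (hf : QD.Q f) : Epi f :=
  (QD.regEpi f hf).some.epi

theorem whiskerLeft_mem (W : C) {X Y : C} {f : X ⟶ Y} (hf : QD.Q f) : QD.Q (W ◁ f) := by
  rw [← id_tensorHom]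
  exact QD.tensor_mem _ _ (QD.iso_mem _ inferInstance) hf

theorem whiskerRight_mem {X Y : C} {f : X ⟶ Y} (hf : QD.Q f) (W : C) : QD.Q (f ▷ W) := by
  rw [← tensorHom_id]
  exact QD.tensor_mem _ _ hf (QD.iso_mem _ inferInstance)

theorem exists_whiskerLeft_comp_eq {X Y T : C} {q : X ⟶ Y} (hq : QD.Q q) (W : C)
    (t : W ⊗ X ⟶ T)
    (ht : ∀ (E : C) (u v : E ⟶ X), u ≫ q = v ≫ q → (W ◁ u) ≫ t = (W ◁ v) ≫ t) :
    ∃ s : W ⊗ Y ⟶ T, (W ◁ q) ≫ s = t := by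
  obtain ⟨E, u, v, huv, -, hW, -⟩ := QD.coeq q hq
  obtain ⟨hcolim⟩ := hW W
  exact ⟨Cofork.IsColimit.desc hcolim t (ht E u v huv), Cofork.IsColimit.π_desc hcolim⟩

theorem exists_whiskerRight_comp_eq {X Y T : C} {q : X ⟶ Y} (hq : QD.Q q) (W : C)
    (t : X ⊗ W ⟶ T)
    (ht : ∀ (E : C) (u v : E ⟶ X), u ≫ q = v ≫ q → (u ▷ W) ≫ t = (v ▷ W) ≫ t) :
    ∃ s : Y ⊗ W ⟶ T, (q ▷ W) ≫ s = t := by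
  obtain ⟨E, u, v, huv, -, -, hW⟩ := QD.coeq q hq
  obtain ⟨hcolim⟩ := hW W
  exact ⟨Cofork.IsColimit.desc hcolim t (ht E u v huv), Cofork.IsColimit.π_desc hcolim⟩

end QData

namespace NonDeg

variable {A : C} {m : A ⊗ A ⟶ A}

theorem eq_of_whiskerLeft_comp (h : NonDeg A m) {W : C} {t t' : W ⟶ A}
    (H : (A ◁ t) ≫ m = (A ◁ t') ≫ m) : t = t' := by
  have key : ∀ s : W ⟶ A,
      (A ◁ (s ≫ (ρ_ A).inv)) ≫ (α_ A A (𝟙_ C)).inv ≫ (m ▷ 𝟙_ C) = (A ◁ s) ≫ m ≫ (ρ_ A).inv := by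
    intro s
    monoidal
  have := h.2 W (𝟙_ C) (a₁ := t ≫ (ρ_ A).inv) (a₂ := t' ≫ (ρ_ A).inv) (by
    dsimp only
    rw [key, key, reassoc_of% H])
  simpa using this

theorem eq_of_whiskerRight_comp (h : NonDeg A m) {W : C} {t t' : W ⟶ A}
    (H : (t ▷ A) ≫ m = (t' ▷ A) ≫ m) : t = t' := by
  have key : ∀ s : W ⟶ A,
      ((s ≫ (λ_ A).inv) ▷ A) ≫ (α_ (𝟙_ C) A A).hom ≫ (𝟙_ C ◁ m) = (s ▷ A) ≫ m ≫ (λ_ A).inv := by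
    intro s
    monoidal
  have := h.1 W (𝟙_ C) (a₁ := t ≫ (λ_ A).inv) (a₂ := t' ≫ (λ_ A).inv) (by
    dsimp only
    rw [key, key, reassoc_of% H])
  simpa using this

end NonDeg

theorem eq_leftUnitor_of_mult₁ {A : C} {v : 𝟙_ C ⊗ A ⟶ A} (hepi : Epi v)
    (hv : Mult₁ (λ_ (𝟙_ C)).hom v) : v = (λ_ A).hom := by
  simp only [Mult₁, leftUnitor_whiskerRight, assoc, id_whiskerLeft,
    Iso.cancel_iso_hom_left] at hv
  have hinv : (λ_ A).inv ≫ v = 𝟙 A := by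
    rw [← cancel_epi v, comp_id]
    exact hv.symm
  simpa using (Iso.inv_comp_eq _).1 hinv

theorem eq_rightUnitor_of_mult₂ {A : C} {v : A ⊗ 𝟙_ C ⟶ A} (hepi : Epi v)
    (hv : Mult₂ (λ_ (𝟙_ C)).hom v) : v = (ρ_ A).hom := by
  simp only [Mult₂, triangle_assoc, whiskerRight_id, Iso.hom_inv_id, comp_id, assoc,
    Iso.cancel_iso_hom_left] at hv
  have hinv : (ρ_ A).inv ≫ v = 𝟙 A := by
    rw [← cancel_epi v, comp_id]
    exact hv.symm
  simpa using (Iso.inv_comp_eq _).1 hinv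

namespace MHom

variable {QD : QData C} {X Y Z W : MObj QD}

theorem f₁_mul (f : MHom X Y) :
    (f.f₁ ▷ Y.A) ≫ Y.m = (α_ X.A Y.A Y.A).hom ≫ (X.A ◁ Y.m) ≫ f.f₁ := by
  apply Y.nondeg.eq_of_whiskerLeft_comp
  have hA : (Y.m ▷ Y.A) ≫ Y.m = (α_ Y.A Y.A Y.A).hom ≫ (Y.A ◁ Y.m) ≫ Y.m := Y.assoc
  calc (Y.A ◁ ((f.f₁ ▷ Y.A) ≫ Y.m)) ≫ Y.m
      = (Y.A ◁ (f.f₁ ▷ Y.A)) ≫ (α_ Y.A Y.A Y.A).inv ≫ (Y.m ▷ Y.A) ≫ Y.m := by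
        rw [hA]; monoidal
    _ = (α_ Y.A (X.A ⊗ Y.A) Y.A).inv ≫ ((α_ Y.A X.A Y.A).inv ▷ Y.A) ≫
          (((f.f₂ ▷ Y.A) ≫ Y.m) ▷ Y.A) ≫ Y.m := by rw [f.compat]; monoidal
    _ = (α_ Y.A (X.A ⊗ Y.A) Y.A).inv ≫ ((α_ Y.A X.A Y.A).inv ▷ Y.A) ≫
          (α_ (Y.A ⊗ X.A) Y.A Y.A).hom ≫ ((Y.A ⊗ X.A) ◁ Y.m) ≫ (f.f₂ ▷ Y.A) ≫ Y.m := by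
        rw [comp_whiskerRight, assoc, hA, whisker_exchange_assoc]; monoidal
    _ = (Y.A ◁ ((α_ X.A Y.A Y.A).hom ≫ (X.A ◁ Y.m) ≫ f.f₁)) ≫ Y.m := by
        rw [f.compat]; monoidal

theorem mul_f₂ (f : MHom X Y) :
    (Y.A ◁ f.f₂) ≫ Y.m = (α_ Y.A Y.A X.A).inv ≫ (Y.m ▷ X.A) ≫ f.f₂ := by
  apply Y.nondeg.eq_of_whiskerRight_comp
  have hA : (Y.m ▷ Y.A) ≫ Y.m = (α_ Y.A Y.A Y.A).hom ≫ (Y.A ◁ Y.m) ≫ Y.m := Y.assoc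
  calc (((Y.A ◁ f.f₂) ≫ Y.m) ▷ Y.A) ≫ Y.m
      = (α_ Y.A (Y.A ⊗ X.A) Y.A).hom ≫ (Y.A ◁ ((f.f₂ ▷ Y.A) ≫ Y.m)) ≫ Y.m := by
        rw [comp_whiskerRight, assoc, hA]; monoidal
    _ = (α_ Y.A (Y.A ⊗ X.A) Y.A).hom ≫ (Y.A ◁ (α_ Y.A X.A Y.A).hom) ≫
          (α_ Y.A Y.A (X.A ⊗ Y.A)).inv ≫ (Y.m ▷ (X.A ⊗ Y.A)) ≫ (Y.A ◁ f.f₁) ≫ Y.m := by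
        rw [f.compat, ← whisker_exchange_assoc, hA]; monoidal
    _ = (((α_ Y.A Y.A X.A).inv ≫ (Y.m ▷ X.A) ≫ f.f₂) ▷ Y.A) ≫ Y.m := by
        rw [comp_whiskerRight, comp_whiskerRight, assoc, assoc, f.compat]; monoidal

/-- The components of `f ∙ g` are the descents of `preComp₁ f g` along `X ◁ g₁` and of
`preComp₂ f g` along `g₂ ▷ X`. -/
def preComp₁ (f : MHom X Y) (g : MHom Y Z) : X.A ⊗ Y.A ⊗ Z.A ⟶ Z.A :=
  (α_ X.A Y.A Z.A).inv ≫ (f.f₁ ▷ Z.A) ≫ g.f₁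

def preComp₂ (f : MHom X Y) (g : MHom Y Z) : (Z.A ⊗ Y.A) ⊗ X.A ⟶ Z.A :=
  (α_ Z.A Y.A X.A).hom ≫ (Z.A ◁ f.f₂) ≫ g.f₂

variable (f : MHom X Y) (g : MHom Y Z)

theorem whiskerLeft_preComp₁_comp_f₁ :
    (Y.A ◁ preComp₁ f g) ≫ g.f₁
      = (α_ Y.A X.A (Y.A ⊗ Z.A)).inv ≫ ((Y.A ⊗ X.A) ◁ g.f₁) ≫ (f.f₂ ▷ Z.A) ≫ g.f₁ := by
  calc (Y.A ◁ preComp₁ f g) ≫ g.f₁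
      = (Y.A ◁ (α_ X.A Y.A Z.A).inv) ≫ (α_ Y.A (X.A ⊗ Y.A) Z.A).inv ≫
          (((Y.A ◁ f.f₁) ≫ Y.m) ▷ Z.A) ≫ g.f₁ := by
        rw [preComp₁, comp_whiskerRight, assoc, g.mult₁]; monoidal
    _ = (Y.A ◁ (α_ X.A Y.A Z.A).inv) ≫ (α_ Y.A (X.A ⊗ Y.A) Z.A).inv ≫
          (((α_ Y.A X.A Y.A).inv ≫ (f.f₂ ▷ Y.A) ≫ Y.m) ▷ Z.A) ≫ g.f₁ := by
        rw [f.compat]; monoidal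
    _ = (α_ Y.A X.A (Y.A ⊗ Z.A)).inv ≫ ((Y.A ⊗ X.A) ◁ g.f₁) ≫ (f.f₂ ▷ Z.A) ≫ g.f₁ := by
        rw [comp_whiskerRight, comp_whiskerRight, assoc, assoc, g.mult₁,
          whisker_exchange_assoc]
        monoidal

theorem preComp_balanced :
    (g.f₂ ▷ (X.A ⊗ Y.A ⊗ Z.A)) ≫ (Z.A ◁ preComp₁ f g) ≫ Z.m
      = (α_ (Z.A ⊗ Y.A) X.A (Y.A ⊗ Z.A)).inv ≫ (preComp₂ f g ⊗ₘ g.f₁) ≫ Z.m := by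
  calc (g.f₂ ▷ (X.A ⊗ Y.A ⊗ Z.A)) ≫ (Z.A ◁ preComp₁ f g) ≫ Z.m
      = (α_ Z.A Y.A (X.A ⊗ Y.A ⊗ Z.A)).hom ≫ (Z.A ◁ ((Y.A ◁ preComp₁ f g) ≫ g.f₁)) ≫ Z.m := by
        rw [← whisker_exchange_assoc, g.compat]; monoidal
    _ = (α_ Z.A Y.A (X.A ⊗ Y.A ⊗ Z.A)).hom ≫
          (Z.A ◁ ((α_ Y.A X.A (Y.A ⊗ Z.A)).inv ≫ ((Y.A ⊗ X.A) ◁ g.f₁) ≫ (f.f₂ ▷ Z.A) ≫ g.f₁)) ≫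
          Z.m := by rw [whiskerLeft_preComp₁_comp_f₁]
    _ = (α_ (Z.A ⊗ Y.A) X.A (Y.A ⊗ Z.A)).inv ≫ (preComp₂ f g ⊗ₘ g.f₁) ≫ Z.m := by
        simp only [preComp₂, tensorHom_def', comp_whiskerRight, assoc]
        rw [g.compat]
        monoidal

theorem whiskerLeft_comp_preComp₁_eq {E : C} {u v : E ⟶ Y.A ⊗ Z.A}
    (huv : u ≫ g.f₁ = v ≫ g.f₁) :
    (X.A ◁ u) ≫ preComp₁ f g = (X.A ◁ v) ≫ preComp₁ f g := by
  apply Z.nondeg.eq_of_whiskerLeft_comp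
  have := QD.epi_of_mem (QD.whiskerRight_mem g.dense₂ (X.A ⊗ E))
  rw [← cancel_epi (g.f₂ ▷ (X.A ⊗ E))]
  have key : ∀ w : E ⟶ Y.A ⊗ Z.A,
      (g.f₂ ▷ (X.A ⊗ E)) ≫ (Z.A ◁ ((X.A ◁ w) ≫ preComp₁ f g)) ≫ Z.m
        = (α_ (Z.A ⊗ Y.A) X.A E).inv ≫ (preComp₂ f g ⊗ₘ (w ≫ g.f₁)) ≫ Z.m := by
    intro w
    calc (g.f₂ ▷ (X.A ⊗ E)) ≫ (Z.A ◁ ((X.A ◁ w) ≫ preComp₁ f g)) ≫ Z.m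
        = ((Z.A ⊗ Y.A) ◁ (X.A ◁ w)) ≫ (g.f₂ ▷ (X.A ⊗ Y.A ⊗ Z.A)) ≫
            (Z.A ◁ preComp₁ f g) ≫ Z.m := by
          rw [whiskerLeft_comp, assoc, ← whisker_exchange_assoc]
      _ = (α_ (Z.A ⊗ Y.A) X.A E).inv ≫ (preComp₂ f g ⊗ₘ (w ≫ g.f₁)) ≫ Z.m := by
          rw [preComp_balanced, associator_inv_naturality_right_assoc]
          simp only [tensorHom_def', whiskerLeft_comp, assoc]
  rw [key u, key v, huv]

theorem whiskerRight_comp_preComp₂_eq {E : C} {u v : E ⟶ Z.A ⊗ Y.A}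
    (huv : u ≫ g.f₂ = v ≫ g.f₂) :
    (u ▷ X.A) ≫ preComp₂ f g = (v ▷ X.A) ≫ preComp₂ f g := by
  apply Z.nondeg.eq_of_whiskerRight_comp
  have := QD.epi_of_mem (QD.whiskerLeft_mem (E ⊗ X.A) g.dense₁)
  rw [← cancel_epi ((E ⊗ X.A) ◁ g.f₁)]
  have key : ∀ w : E ⟶ Z.A ⊗ Y.A,
      ((E ⊗ X.A) ◁ g.f₁) ≫ (((w ▷ X.A) ≫ preComp₂ f g) ▷ Z.A) ≫ Z.m
        = (α_ E X.A (Y.A ⊗ Z.A)).hom ≫ ((w ≫ g.f₂) ▷ (X.A ⊗ Y.A ⊗ Z.A)) ≫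
            (Z.A ◁ preComp₁ f g) ≫ Z.m := by
    intro w
    calc ((E ⊗ X.A) ◁ g.f₁) ≫ (((w ▷ X.A) ≫ preComp₂ f g) ▷ Z.A) ≫ Z.m
        = ((w ▷ X.A) ▷ (Y.A ⊗ Z.A)) ≫ (preComp₂ f g ⊗ₘ g.f₁) ≫ Z.m := by
          rw [comp_whiskerRight, assoc, whisker_exchange_assoc, tensorHom_def', assoc]
      _ = ((w ▷ X.A) ▷ (Y.A ⊗ Z.A)) ≫ (α_ (Z.A ⊗ Y.A) X.A (Y.A ⊗ Z.A)).hom ≫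
            (g.f₂ ▷ (X.A ⊗ Y.A ⊗ Z.A)) ≫ (Z.A ◁ preComp₁ f g) ≫ Z.m := by
          rw [preComp_balanced, Iso.hom_inv_id_assoc]
      _ = (α_ E X.A (Y.A ⊗ Z.A)).hom ≫ ((w ≫ g.f₂) ▷ (X.A ⊗ Y.A ⊗ Z.A)) ≫
            (Z.A ◁ preComp₁ f g) ≫ Z.m := by
          rw [associator_naturality_left_assoc, comp_whiskerRight_assoc]
  rw [key u, key v, huv]

theorem exists_whiskerLeft_f₁_comp_eq :
    ∃ h₁ : X.A ⊗ Z.A ⟶ Z.A, (X.A ◁ g.f₁) ≫ h₁ = preComp₁ f g :=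
  QD.exists_whiskerLeft_comp_eq g.dense₁ X.A _ fun _ _ _ =>
    whiskerLeft_comp_preComp₁_eq f g

theorem exists_f₂_whiskerRight_comp_eq :
    ∃ h₂ : Z.A ⊗ X.A ⟶ Z.A, (g.f₂ ▷ X.A) ≫ h₂ = preComp₂ f g :=
  QD.exists_whiskerRight_comp_eq g.dense₂ X.A _ fun _ _ _ =>
    whiskerRight_comp_preComp₂_eq f g

section Descent

variable {f g} {h₁ : X.A ⊗ Z.A ⟶ Z.A} {h₂ : Z.A ⊗ X.A ⟶ Z.A}

theorem mult₁_of_whiskerLeft_comp_eq (hh : (X.A ◁ g.f₁) ≫ h₁ = preComp₁ f g) :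
    Mult₁ X.m h₁ := by
  have := QD.epi_of_mem (QD.whiskerLeft_mem (X.A ⊗ X.A) g.dense₁)
  rw [Mult₁, ← cancel_epi ((X.A ⊗ X.A) ◁ g.f₁)]
  calc ((X.A ⊗ X.A) ◁ g.f₁) ≫ (X.m ▷ Z.A) ≫ h₁
      = (X.m ▷ (Y.A ⊗ Z.A)) ≫ preComp₁ f g := by rw [whisker_exchange_assoc, hh]
    _ = (α_ (X.A ⊗ X.A) Y.A Z.A).inv ≫ (((X.m ▷ Y.A) ≫ f.f₁) ▷ Z.A) ≫ g.f₁ := by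
        rw [preComp₁]; monoidal
    _ = (α_ X.A X.A (Y.A ⊗ Z.A)).hom ≫ (X.A ◁ preComp₁ f g) ≫ h₁ := by
        simp only [preComp₁, whiskerLeft_comp, assoc]
        rw [hh, preComp₁, f.mult₁]
        monoidal
    _ = ((X.A ⊗ X.A) ◁ g.f₁) ≫ (α_ X.A X.A Z.A).hom ≫ (X.A ◁ h₁) ≫ h₁ := by
        rw [← hh]; monoidal

theorem mult₂_of_f₂_whiskerRight_comp_eq (hh : (g.f₂ ▷ X.A) ≫ h₂ = preComp₂ f g) :
    Mult₂ X.m h₂ := by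
  have := QD.epi_of_mem (QD.whiskerRight_mem (QD.whiskerRight_mem g.dense₂ X.A) X.A)
  rw [Mult₂, ← cancel_epi ((g.f₂ ▷ X.A) ▷ X.A)]
  calc ((g.f₂ ▷ X.A) ▷ X.A) ≫ (α_ Z.A X.A X.A).hom ≫ (Z.A ◁ X.m) ≫ h₂
      = (α_ (Z.A ⊗ Y.A) X.A X.A).hom ≫ ((Z.A ⊗ Y.A) ◁ X.m) ≫ preComp₂ f g := by
        rw [associator_naturality_left_assoc, ← whisker_exchange_assoc, hh]
    _ = ((α_ Z.A Y.A X.A).hom ▷ X.A) ≫ (α_ Z.A (Y.A ⊗ X.A) X.A).hom ≫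
          (Z.A ◁ ((f.f₂ ▷ X.A) ≫ f.f₂)) ≫ g.f₂ := by
        rw [← f.mult₂, preComp₂]; monoidal
    _ = (preComp₂ f g ▷ X.A) ≫ h₂ := by
        simp only [preComp₂, comp_whiskerRight, assoc]
        rw [hh, preComp₂]
        monoidal
    _ = ((g.f₂ ▷ X.A) ▷ X.A) ≫ (h₂ ▷ X.A) ≫ h₂ := by
        rw [← hh, comp_whiskerRight_assoc]

theorem isMMor_of_comp_eq (hh₁ : (X.A ◁ g.f₁) ≫ h₁ = preComp₁ f g)
    (hh₂ : (g.f₂ ▷ X.A) ≫ h₂ = preComp₂ f g) : IsMMor Z.m h₁ h₂ := by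
  have := QD.epi_of_mem (QD.tensor_mem _ _ (QD.whiskerRight_mem g.dense₂ X.A) g.dense₁)
  rw [IsMMor, ← cancel_epi ((g.f₂ ▷ X.A) ⊗ₘ g.f₁)]
  calc ((g.f₂ ▷ X.A) ⊗ₘ g.f₁) ≫ (h₂ ▷ Z.A) ≫ Z.m
      = (preComp₂ f g ⊗ₘ g.f₁) ≫ Z.m := by
        rw [← hh₂, tensorHom_def', tensorHom_def', comp_whiskerRight]
        simp only [assoc]
    _ = (α_ (Z.A ⊗ Y.A) X.A (Y.A ⊗ Z.A)).hom ≫ (g.f₂ ▷ (X.A ⊗ Y.A ⊗ Z.A)) ≫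
          (Z.A ◁ preComp₁ f g) ≫ Z.m := by
        rw [preComp_balanced, Iso.hom_inv_id_assoc]
    _ = ((g.f₂ ▷ X.A) ⊗ₘ g.f₁) ≫ (α_ Z.A X.A Z.A).hom ≫ (Z.A ◁ h₁) ≫ Z.m := by
        rw [← hh₁, MonoidalCategory.tensorHom_def]; monoidal

theorem mem_of_whiskerLeft_comp_eq (hh : (X.A ◁ g.f₁) ≫ h₁ = preComp₁ f g) : QD.Q h₁ :=
  QD.cancel _ _ (QD.whiskerLeft_mem X.A g.dense₁) <| by
    rw [hh, preComp₁]
    exact QD.comp_mem _ _ (QD.iso_mem _ inferInstance)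
      (QD.comp_mem _ _ (QD.whiskerRight_mem f.dense₁ _) g.dense₁)

theorem mem_of_f₂_whiskerRight_comp_eq (hh : (g.f₂ ▷ X.A) ≫ h₂ = preComp₂ f g) :
    QD.Q h₂ :=
  QD.cancel _ _ (QD.whiskerRight_mem g.dense₂ X.A) <| by
    rw [hh, preComp₂]
    exact QD.comp_mem _ _ (QD.iso_mem _ inferInstance)
      (QD.comp_mem _ _ (QD.whiskerLeft_mem _ f.dense₂) g.dense₂)

end Descent

noncomputable def comp : MHom X Z where
  f₁ := (exists_whiskerLeft_f₁_comp_eq f g).choose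
  f₂ := (exists_f₂_whiskerRight_comp_eq f g).choose
  compat := isMMor_of_comp_eq (exists_whiskerLeft_f₁_comp_eq f g).choose_spec
    (exists_f₂_whiskerRight_comp_eq f g).choose_spec
  mult₁ := mult₁_of_whiskerLeft_comp_eq (exists_whiskerLeft_f₁_comp_eq f g).choose_spec
  mult₂ := mult₂_of_f₂_whiskerRight_comp_eq (exists_f₂_whiskerRight_comp_eq f g).choose_spec
  dense₁ := mem_of_whiskerLeft_comp_eq (exists_whiskerLeft_f₁_comp_eq f g).choose_spec
  dense₂ := mem_of_f₂_whiskerRight_comp_eq (exists_f₂_whiskerRight_comp_eq f g).choose_spec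

theorem whiskerLeft_f₁_comp_comp_f₁ :
    (X.A ◁ g.f₁) ≫ (comp f g).f₁ = (α_ X.A Y.A Z.A).inv ≫ (f.f₁ ▷ Z.A) ≫ g.f₁ :=
  (exists_whiskerLeft_f₁_comp_eq f g).choose_spec

theorem f₂_whiskerRight_comp_comp_f₂ :
    (g.f₂ ▷ X.A) ≫ (comp f g).f₂ = (α_ Z.A Y.A X.A).hom ≫ (Z.A ◁ f.f₂) ≫ g.f₂ :=
  (exists_f₂_whiskerRight_comp_eq f g).choose_spec

theorem idM_comp : comp X.idM f = f := by
  have := QD.epi_of_mem (QD.whiskerLeft_mem X.A f.dense₁)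
  have := QD.epi_of_mem (QD.whiskerRight_mem f.dense₂ X.A)
  refine MHom.ext ((cancel_epi (X.A ◁ f.f₁)).1 ?_) ((cancel_epi (f.f₂ ▷ X.A)).1 ?_)
  · rw [whiskerLeft_f₁_comp_comp_f₁, Iso.inv_comp_eq]
    exact f.mult₁
  · rw [f₂_whiskerRight_comp_comp_f₂]
    exact f.mult₂

theorem comp_idM : comp f Y.idM = f := by
  have := QD.epi_of_mem (QD.whiskerLeft_mem X.A Y.mQ)
  have := QD.epi_of_mem (QD.whiskerRight_mem Y.mQ X.A)
  refine MHom.ext ((cancel_epi (X.A ◁ Y.m)).1 ?_) ((cancel_epi (Y.m ▷ X.A)).1 ?_)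
  · exact (whiskerLeft_f₁_comp_comp_f₁ f Y.idM).trans ((Iso.inv_comp_eq _).2 f.f₁_mul)
  · exact (f₂_whiskerRight_comp_comp_f₂ f Y.idM).trans ((Iso.eq_inv_comp _).1 f.mul_f₂)

variable (h : MHom Z W)

theorem comp_assoc_f₁ : (comp (comp f g) h).f₁ = (comp f (comp g h)).f₁ := by
  have := QD.epi_of_mem (QD.whiskerLeft_mem X.A (QD.comp_mem _ _
    (QD.whiskerRight_mem g.dense₁ W.A) h.dense₁))
  rw [← cancel_epi (X.A ◁ ((g.f₁ ▷ W.A) ≫ h.f₁))]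
  calc (X.A ◁ ((g.f₁ ▷ W.A) ≫ h.f₁)) ≫ (comp (comp f g) h).f₁
      = (α_ X.A (Y.A ⊗ Z.A) W.A).inv ≫ (((X.A ◁ g.f₁) ≫ (comp f g).f₁) ▷ W.A) ≫ h.f₁ := by
        rw [whiskerLeft_comp_assoc, whiskerLeft_f₁_comp_comp_f₁ (comp f g) h]; monoidal
    _ = (α_ X.A (Y.A ⊗ Z.A) W.A).inv ≫ (((α_ X.A Y.A Z.A).inv ≫ (f.f₁ ▷ Z.A)) ▷ W.A) ≫
          (α_ Y.A Z.A W.A).hom ≫ (Y.A ◁ h.f₁) ≫ (comp g h).f₁ := by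
        rw [whiskerLeft_f₁_comp_comp_f₁ f g, whiskerLeft_f₁_comp_comp_f₁ g h]; monoidal
    _ = (X.A ◁ ((α_ Y.A Z.A W.A).hom ≫ (Y.A ◁ h.f₁))) ≫ (X.A ◁ (comp g h).f₁) ≫
          (comp f (comp g h)).f₁ := by
        rw [whiskerLeft_f₁_comp_comp_f₁ f (comp g h), whiskerLeft_comp_assoc,
          associator_inv_naturality_right_assoc, whisker_exchange_assoc]
        monoidal
    _ = (X.A ◁ ((g.f₁ ▷ W.A) ≫ h.f₁)) ≫ (comp f (comp g h)).f₁ := by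
        rw [← whiskerLeft_comp_assoc, assoc, whiskerLeft_f₁_comp_comp_f₁ g h,
          Iso.hom_inv_id_assoc]

theorem comp_assoc_f₂ : (comp (comp f g) h).f₂ = (comp f (comp g h)).f₂ := by
  have := QD.epi_of_mem (QD.whiskerRight_mem (QD.comp_mem _ _
    (QD.whiskerLeft_mem W.A g.dense₂) h.dense₂) X.A)
  rw [← cancel_epi (((W.A ◁ g.f₂) ≫ h.f₂) ▷ X.A)]
  calc (((W.A ◁ g.f₂) ≫ h.f₂) ▷ X.A) ≫ (comp (comp f g) h).f₂
      = (α_ W.A (Z.A ⊗ Y.A) X.A).hom ≫ (W.A ◁ ((g.f₂ ▷ X.A) ≫ (comp f g).f₂)) ≫ h.f₂ := by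
        rw [comp_whiskerRight_assoc, f₂_whiskerRight_comp_comp_f₂ (comp f g) h]; monoidal
    _ = ((α_ W.A Z.A Y.A).inv ▷ X.A) ≫ (α_ (W.A ⊗ Z.A) Y.A X.A).hom ≫
          ((W.A ⊗ Z.A) ◁ f.f₂) ≫ (h.f₂ ▷ Y.A) ≫ (comp g h).f₂ := by
        rw [f₂_whiskerRight_comp_comp_f₂ f g, f₂_whiskerRight_comp_comp_f₂ g h]; monoidal
    _ = (((α_ W.A Z.A Y.A).inv ≫ (h.f₂ ▷ Y.A)) ▷ X.A) ≫ ((comp g h).f₂ ▷ X.A) ≫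
          (comp f (comp g h)).f₂ := by
        rw [f₂_whiskerRight_comp_comp_f₂ f (comp g h), whisker_exchange_assoc]; monoidal
    _ = (((W.A ◁ g.f₂) ≫ h.f₂) ▷ X.A) ≫ (comp f (comp g h)).f₂ := by
        rw [← comp_whiskerRight_assoc, assoc, f₂_whiskerRight_comp_comp_f₂ g h,
          Iso.inv_hom_id_assoc]

theorem comp_assoc : comp (comp f g) h = comp f (comp g h) :=
  MHom.ext (comp_assoc_f₁ f g h) (comp_assoc_f₂ f g h)

end MHom

namespace MObj

variable {QD : QData C}

def fromUnit (X : MObj QD) : MHom (MObj.unit QD) X where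
  f₁ := (λ_ X.A).hom
  f₂ := (ρ_ X.A).hom
  compat := by
    change ((ρ_ X.A).hom ▷ X.A) ≫ X.m = (α_ X.A (𝟙_ C) X.A).hom ≫ (X.A ◁ (λ_ X.A).hom) ≫ X.m
    rw [← triangle_assoc]
  mult₁ := by
    change ((λ_ (𝟙_ C)).hom ▷ X.A) ≫ (λ_ X.A).hom
      = (α_ (𝟙_ C) (𝟙_ C) X.A).hom ≫ (𝟙_ C ◁ (λ_ X.A).hom) ≫ (λ_ X.A).hom
    monoidal
  mult₂ := by
    change (α_ X.A (𝟙_ C) (𝟙_ C)).hom ≫ (X.A ◁ (λ_ (𝟙_ C)).hom) ≫ (ρ_ X.A).hom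
      = ((ρ_ X.A).hom ▷ 𝟙_ C) ≫ (ρ_ X.A).hom
    monoidal
  dense₁ := QD.iso_mem _ (λ_ X.A).isIso_hom
  dense₂ := QD.iso_mem _ (ρ_ X.A).isIso_hom

theorem eq_fromUnit {X : MObj QD} (u : MHom (MObj.unit QD) X) : u = X.fromUnit :=
  MHom.ext (eq_leftUnitor_of_mult₁ (QD.epi_of_mem u.dense₁) u.mult₁)
    (eq_rightUnitor_of_mult₂ (QD.epi_of_mem u.dense₂) u.mult₂)

end MObj

/-- Proposition 3.4: there is a category `ℳ` whose objects are the non-degenerate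
semigroups with multiplication in `Q` and whose morphisms are the dense multiplicative
`𝕄`-morphisms, with composition `∙` characterized by the equations of (3.1), identities
`i = (m, m)`, and with the monoidal unit (with trivial multiplication) initial. -/
theorem category_M_exists (QD : QData C) :
    ∃ comp : ∀ {X Y Z : MObj QD}, MHom X Y → MHom Y Z → MHom X Z,
      (∀ (X Y Z : MObj QD) (f : MHom X Y) (g : MHom Y Z),
        ((α_ X.A Y.A Z.A).hom ≫ (X.A ◁ g.f₁) ≫ (comp f g).f₁ = (f.f₁ ▷ Z.A) ≫ g.f₁) ∧
        ((g.f₂ ▷ X.A) ≫ (comp f g).f₂ = (α_ Z.A Y.A X.A).hom ≫ (Z.A ◁ f.f₂) ≫ g.f₂)) ∧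
      (∀ (X Y : MObj QD) (f : MHom X Y),
        comp (MObj.idM X) f = f ∧ comp f (MObj.idM Y) = f) ∧
      (∀ (X Y Z W : MObj QD) (f : MHom X Y) (g : MHom Y Z) (h : MHom Z W),
        comp (comp f g) h = comp f (comp g h)) ∧
      (∀ X : MObj QD, ∃! _u : MHom (MObj.unit QD) X, True) := by
  refine ⟨MHom.comp, fun _ _ _ f g => ⟨?_, MHom.f₂_whiskerRight_comp_comp_f₂ f g⟩,
    fun _ _ f => ⟨MHom.idM_comp f, MHom.comp_idM f⟩, fun _ _ _ _ => MHom.comp_assoc,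
    fun X => ⟨X.fromUnit, trivial, fun u _ => MObj.eq_fromUnit u⟩⟩
  rw [MHom.whiskerLeft_f₁_comp_comp_f₁, Iso.hom_inv_id_assoc]
end
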